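/- Let |φ⟩ = (|0⟩+|1⟩)/√2 ∈ ℂ², and for n ≥ 1 qubits indexed 1,…,n plus a distinguished qubit i, let U_tot = ∏_{k=1}^{n} U_{i,j_k} be the product of controlled-Ū operators with common control qubit i and distinct targets j_1,…,j_n, where Ū = e^{-iψ} diag(e^{iθ}, e^{-iθ}). Then ⟨φ|^{⊗(n+1)} U_tot† σ^{(i)} U_tot |φ⟩^{⊗(n+1)} = cosⁿθ (cos(nψ), -sin(nψ), 0), and hence the contribution of qubit i to the entanglement distance is E^{(i)} = 1 - cos^{2n}θ. -/

import Mathlib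

open Complex Matrix BigOperators Finset

noncomputable section

/-- Pauli X. -/
def σx : Matrix (Fin 2) (Fin 2) ℂ := !![0, 1; 1, 0]
/-- Pauli Y. -/
def σy : Matrix (Fin 2) (Fin 2) ℂ := !![0, -I; I, 0]
/-- Pauli Z. -/
def σz : Matrix (Fin 2) (Fin 2) ℂ := !![1, 0; 0, -1]
/-- Projector on |0⟩. -/
def P0 : Matrix (Fin 2) (Fin 2) ℂ := !![1, 0; 0, 0]
/-- Projector on |1⟩. -/
def P1 : Matrix (Fin 2) (Fin 2) ℂ := !![0, 0; 0, 1]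
/-- Ū = e^{-iψ} diag(e^{iθ}, e^{-iθ}). -/
def Ubar (ψ θ : ℝ) : Matrix (Fin 2) (Fin 2) ℂ :=
  Complex.exp (-I * ψ) • !![Complex.exp (I * θ), 0; 0, Complex.exp (-I * θ)]
/-- The single-qubit state |φ⟩ = (|0⟩+|1⟩)/√2. -/
def phi1 : Fin 2 → ℂ := fun _ => 1 / Real.sqrt 2
/-- The product state |φ⟩^{⊗M}. -/
def prodPhi (M : ℕ) : (Fin M → Fin 2) → ℂ := fun _ => (1 / Real.sqrt 2) ^ M

/-- A single-qubit operator acting on qubit `i` of an `M`-qubit register. -/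
def onSite {M : ℕ} (i : Fin M) (A : Matrix (Fin 2) (Fin 2) ℂ) :
    Matrix (Fin M → Fin 2) (Fin M → Fin 2) ℂ :=
  Matrix.of fun x y => A (x i) (y i) * ∏ j ∈ Finset.univ.erase i, (if x j = y j then (1:ℂ) else 0)

/-- `A` on qubit `a` tensored with `B` on qubit `b`, identity elsewhere. -/
def twoSite {M : ℕ} (a b : Fin M) (A B : Matrix (Fin 2) (Fin 2) ℂ) :
    Matrix (Fin M → Fin 2) (Fin M → Fin 2) ℂ :=
  Matrix.of fun x y => A (x a) (y a) * B (x b) (y b) *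
    ∏ j ∈ (Finset.univ.erase a).erase b, (if x j = y j then (1:ℂ) else 0)

/-- The controlled-Ū gate `U_{ab} = Π₀^{(a)} ⊗ I^{(b)} + Π₁^{(a)} ⊗ Ū^{(b)}`. -/
def ctrlU {M : ℕ} (a b : Fin M) (ψ θ : ℝ) : Matrix (Fin M → Fin 2) (Fin M → Fin 2) ℂ :=
  twoSite a b P0 1 + twoSite a b P1 (Ubar ψ θ)

/-- Expectation value ⟨v|A|v⟩. -/
def expec {n : Type*} [Fintype n] (v : n → ℂ) (A : Matrix n n ℂ) : ℂ :=
  ∑ x, ∑ y, (starRingEnd ℂ) (v x) * A x y * v y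

/-- ‖⟨v|σ^{(i)}|v⟩‖², the squared Euclidean norm of the vector of the three
Pauli expectation values on qubit `i`. -/
def pauliNormSq {M : ℕ} (v : (Fin M → Fin 2) → ℂ) (i : Fin M) : ℝ :=
  (expec v (onSite i σx)).re ^ 2 + (expec v (onSite i σy)).re ^ 2 +
    (expec v (onSite i σz)).re ^ 2

/-- The entanglement distance per qubit. -/
def ED {M : ℕ} (v : (Fin M → Fin 2) → ℂ) : ℝ :=
  1 - (1 / M) * ∑ i, pauliNormSq v i


/-! Every gate is diagonal in the computational basis, so the final state is
`G(a, r) = 2^{-(n+1)/2} ∏ₖ c(a, rₖ)` with `c(0, ·) = 1` and `c(1, ·)` the diagonal of `Ū`.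
The reduced density matrix of the control qubit is then `½ [[1, wⁿ], [w̄ⁿ, 1]]`, its
off-diagonal entry factorising over the `n` targets into powers of
`w = ⟨φ|Ū|φ⟩ = cos θ · e^{-iψ}`; the Pauli expectations are `(Re wⁿ, Im wⁿ, 0)`. -/

def ubarPhase (ψ θ : ℝ) : Fin 2 → ℂ :=
  ![Complex.exp (-I * ψ) * Complex.exp (I * θ), Complex.exp (-I * ψ) * Complex.exp (-I * θ)]

def ctrlPhase (ψ θ : ℝ) (a s : Fin 2) : ℂ := if a = 0 then 1 else ubarPhase ψ θ s

lemma Ubar_eq_diagonal (ψ θ : ℝ) : Ubar ψ θ = diagonal (ubarPhase ψ θ) := by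
  ext i j; fin_cases i <;> fin_cases j <;> simp [Ubar, ubarPhase]

lemma twoSite_diagonal {M : ℕ} (a b : Fin M) (f g : Fin 2 → ℂ) :
    twoSite a b (diagonal f) (diagonal g) = diagonal fun x => f (x a) * g (x b) := by
  ext x y
  obtain rfl | hxy := eq_or_ne x y
  · simp [twoSite]
  obtain ⟨j, hj⟩ := Function.ne_iff.mp hxy
  rw [diagonal_apply_ne _ hxy]
  by_cases hja : j = a
  · subst hja; simp [twoSite, hj]
  by_cases hjb : j = b
  · subst hjb; simp [twoSite, hj]
  · simp only [twoSite, of_apply]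
    rw [Finset.prod_eq_zero (i := j) (by simp [hja, hjb]) (by simp [hj]), mul_zero]

lemma ctrlU_eq_diagonal {M : ℕ} (a b : Fin M) (ψ θ : ℝ) :
    ctrlU a b ψ θ = diagonal fun x => ctrlPhase ψ θ (x a) (x b) := by
  have hP0 : P0 = diagonal ![1, 0] := by
    ext i j; fin_cases i <;> fin_cases j <;> simp [P0]
  have hP1 : P1 = diagonal ![0, 1] := by
    ext i j; fin_cases i <;> fin_cases j <;> simp [P1]
  rw [ctrlU, hP0, hP1, Ubar_eq_diagonal, ← diagonal_one, twoSite_diagonal,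
    twoSite_diagonal, diagonal_add]
  congr 1
  funext x
  generalize x a = i
  fin_cases i <;> simp [ctrlPhase]

lemma list_prod_ofFn_diagonal {X R : Type*} [Fintype X] [DecidableEq X] [CommSemiring R]
    {n : ℕ} (d : Fin n → X → R) :
    (List.ofFn fun k => diagonal (d k)).prod = diagonal (∏ k, d k) := by
  rw [← List.prod_ofFn]
  change _ = diagonalRingHom X R _
  rw [map_list_prod, List.map_ofFn]
  rfl

lemma sum_pi_fin_succ_cons {α M : Type*} [Fintype α] [AddCommMonoid M] {n : ℕ}
    (f : (Fin (n + 1) → α) → M) :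
    ∑ x, f x = ∑ a, ∑ r : Fin n → α, f (Fin.cons a r) := by
  rw [← (Fin.consEquiv fun _ => α).sum_comp, Fintype.sum_prod_type]
  rfl

lemma onSite_zero_cons {n : ℕ} (A : Matrix (Fin 2) (Fin 2) ℂ) (a b : Fin 2)
    (r s : Fin n → Fin 2) :
    onSite 0 A (Fin.cons a r) (Fin.cons b s) = if r = s then A a b else 0 := by
  have hsucc : (∀ j ∈ univ.erase (0 : Fin (n + 1)),
      (Fin.cons a r : Fin (n + 1) → Fin 2) j = (Fin.cons b s : Fin (n + 1) → Fin 2) j) ↔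
        r = s := by
    refine ⟨fun h => funext fun i => by simpa using h i.succ (by simp), ?_⟩
    rintro rfl j hj
    obtain ⟨i, rfl⟩ := Fin.exists_succ_eq.mpr (Finset.ne_of_mem_erase hj)
    simp
  simp only [onSite, of_apply, Fin.cons_zero, Finset.prod_boole, hsucc, mul_ite, mul_one,
    mul_zero]

-- The inner sum over `r` is the reduced density matrix of qubit `0`, read as `ρ b a`.
lemma expec_onSite_zero {n : ℕ} (v : (Fin (n + 1) → Fin 2) → ℂ) (A : Matrix (Fin 2) (Fin 2) ℂ) :
    expec v (onSite 0 A) =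
      ∑ a, ∑ b, A a b * ∑ r, starRingEnd ℂ (v (Fin.cons a r)) * v (Fin.cons b r) := by
  simp only [expec, sum_pi_fin_succ_cons, onSite_zero_cons, mul_ite, ite_mul, mul_zero, zero_mul,
    Finset.sum_ite_eq, Finset.mem_univ, if_true, Finset.mul_sum]
  refine Finset.sum_congr rfl fun a _ => ?_
  rw [Finset.sum_comm]
  refine Finset.sum_congr rfl fun b _ => Finset.sum_congr rfl fun r _ => ?_
  ring

lemma expec_onSite_zero_of_eq_mul_prod {n : ℕ} {v : (Fin (n + 1) → Fin 2) → ℂ} {c : ℂ}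
    {f : Fin 2 → Fin 2 → ℂ} (hv : ∀ a r, v (Fin.cons a r) = c * ∏ k, f a (r k))
    (A : Matrix (Fin 2) (Fin 2) ℂ) :
    expec v (onSite 0 A) =
      normSq c * ∑ a, ∑ b, A a b * (∑ s, starRingEnd ℂ (f a s) * f b s) ^ n := by
  simp only [expec_onSite_zero, hv, Fintype.sum_pow, Finset.mul_sum]
  refine Finset.sum_congr rfl fun a _ => Finset.sum_congr rfl fun b _ =>
    Finset.sum_congr rfl fun r _ => ?_
  simp only [map_mul, map_prod, Finset.prod_mul_distrib, Complex.normSq_eq_conj_mul_self]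
  ring

def ctrlStarState (n : ℕ) (ψ θ : ℝ) : (Fin (n + 1) → Fin 2) → ℂ :=
  (List.ofFn fun k : Fin n => ctrlU (0 : Fin (n + 1)) k.succ ψ θ).prod *ᵥ prodPhi (n + 1)

lemma ctrlStarState_cons (n : ℕ) (ψ θ : ℝ) (a : Fin 2) (r : Fin n → Fin 2) :
    ctrlStarState n ψ θ (Fin.cons a r) =
      (1 / Real.sqrt 2 : ℂ) ^ (n + 1) * ∏ k, ctrlPhase ψ θ a (r k) := by
  simp only [ctrlStarState, ctrlU_eq_diagonal, list_prod_ofFn_diagonal,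
    mulVec_diagonal, prodPhi, Finset.prod_apply, Fin.cons_zero, Fin.cons_succ]
  ring

lemma conj_ubarPhase_mul_self (ψ θ : ℝ) (s : Fin 2) :
    starRingEnd ℂ (ubarPhase ψ θ s) * ubarPhase ψ θ s = 1 := by
  rw [Complex.conj_mul']
  fin_cases s <;> simp [ubarPhase, neg_mul, Complex.exp_neg, Complex.norm_exp_I_mul_ofReal]

lemma ubarPhase_zero_add_one (ψ θ : ℝ) :
    ubarPhase ψ θ 0 + ubarPhase ψ θ 1 = 2 * (Real.cos θ * exp (-ψ * I)) := by
  simp only [ubarPhase, Matrix.cons_val_zero, Matrix.cons_val_one, ← mul_add,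
    Complex.ofReal_cos, Complex.cos]
  ring_nf

lemma sum_conj_ctrlPhase_mul (ψ θ : ℝ) (a b : Fin 2) :
    ∑ s, starRingEnd ℂ (ctrlPhase ψ θ a s) * ctrlPhase ψ θ b s =
      2 * !![1, Real.cos θ * exp (-ψ * I); starRingEnd ℂ (Real.cos θ * exp (-ψ * I)), 1] a b := by
  fin_cases a <;> fin_cases b <;>
    simp only [ctrlPhase, Fin.sum_univ_two, Fin.zero_eta, Fin.mk_one, ↓reduceIte, one_ne_zero,
      map_one, one_mul, mul_one, conj_ubarPhase_mul_self, ← map_add, ubarPhase_zero_add_one,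
      Matrix.of_apply, Matrix.cons_val', Matrix.cons_val_zero, Matrix.cons_val_one,
      Matrix.empty_val', Matrix.cons_val_fin_one, map_mul, map_ofNat] <;>
    norm_num

lemma expec_ctrlStarState_onSite_zero (n : ℕ) (ψ θ : ℝ) (A : Matrix (Fin 2) (Fin 2) ℂ) :
    expec (ctrlStarState n ψ θ) (onSite 0 A) =
      (A 0 0 + A 1 1 + A 0 1 * (Real.cos θ * exp (-ψ * I)) ^ n +
        A 1 0 * starRingEnd ℂ ((Real.cos θ * exp (-ψ * I)) ^ n)) / 2 := by
  have hnorm : normSq ((1 / Real.sqrt 2 : ℂ) ^ (n + 1)) = 1 / 2 ^ (n + 1) := by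
    rw [map_pow, map_div₀, map_one, Complex.normSq_ofReal, Real.mul_self_sqrt zero_le_two,
      _root_.one_div_pow]
  rw [expec_onSite_zero_of_eq_mul_prod (ctrlStarState_cons n ψ θ), hnorm]
  simp only [sum_conj_ctrlPhase_mul]
  simp only [Fin.sum_univ_two, mul_pow, Matrix.of_apply,
    Matrix.cons_val', Matrix.cons_val_zero, Matrix.cons_val_one, Matrix.empty_val',
    Matrix.cons_val_fin_one, one_pow, map_pow, map_mul]
  push_cast
  field_simp
  ring

lemma ofReal_cos_mul_exp_pow (n : ℕ) (ψ θ : ℝ) :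
    ((Real.cos θ : ℂ) * exp (-ψ * I)) ^ n =
      ↑(Real.cos θ ^ n * Real.cos (n * ψ)) - ↑(Real.cos θ ^ n * Real.sin (n * ψ)) * I := by
  have harg : (n : ℂ) * (-ψ * I) = ↑(-(n * ψ)) * I := by push_cast; ring
  rw [mul_pow, ← Complex.exp_nat_mul, harg, Complex.exp_mul_I, ← Complex.ofReal_cos,
    ← Complex.ofReal_sin, Real.cos_neg, Real.sin_neg]
  push_cast
  ring

lemma expec_ctrlStarState_onSite_zero_pauli (n : ℕ) (ψ θ : ℝ) :
    expec (ctrlStarState n ψ θ) (onSite 0 σx) = ↑(Real.cos θ ^ n * Real.cos (n * ψ)) ∧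
    expec (ctrlStarState n ψ θ) (onSite 0 σy) = ↑(-(Real.cos θ ^ n * Real.sin (n * ψ))) ∧
    expec (ctrlStarState n ψ θ) (onSite 0 σz) = 0 := by
  simp only [expec_ctrlStarState_onSite_zero, ofReal_cos_mul_exp_pow, map_sub, map_mul,
    Complex.conj_ofReal, Complex.conj_I]
  refine ⟨by simp [σx], ?_, by simp [σz]⟩
  simp only [σy, Matrix.of_apply, Matrix.cons_val', Matrix.cons_val_zero, Matrix.cons_val_one,
    Matrix.empty_val', Matrix.cons_val_fin_one, zero_add, ofReal_neg]
  linear_combination (↑(Real.cos θ ^ n * Real.sin (n * ψ)) : ℂ) * Complex.I_sq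

theorem stmt13_general (n : ℕ) (ψ θ : ℝ) :
    let Utot := (List.ofFn fun k : Fin n => ctrlU (0 : Fin (n + 1)) k.succ ψ θ).prod
    let G := Utot.mulVec (prodPhi (n + 1))
    (expec G (onSite (0 : Fin (n + 1)) σx)).re = Real.cos θ ^ n * Real.cos (n * ψ) ∧
    (expec G (onSite (0 : Fin (n + 1)) σy)).re = -(Real.cos θ ^ n * Real.sin (n * ψ)) ∧
    (expec G (onSite (0 : Fin (n + 1)) σz)).re = 0 ∧
    1 - pauliNormSq G 0 = 1 - Real.cos θ ^ (2 * n) := by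
  intro Utot G
  obtain ⟨hx, hy, hz⟩ : expec G (onSite 0 σx) = _ ∧ expec G (onSite 0 σy) = _ ∧
      expec G (onSite 0 σz) = _ :=
    expec_ctrlStarState_onSite_zero_pauli n ψ θ
  simp only [pauliNormSq, hx, hy, hz, ofReal_re, zero_re, true_and]
  linear_combination (-Real.cos θ ^ (2 * n)) * Real.sin_sq_add_cos_sq (n * ψ)

theorem stmt13 (n : ℕ) (hn : 1 ≤ n) (ψ θ : ℝ) :
    let Utot := (List.ofFn fun k : Fin n => ctrlU (0 : Fin (n + 1)) k.succ ψ θ).prod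
    let G := Utot.mulVec (prodPhi (n + 1))
    (expec G (onSite (0 : Fin (n + 1)) σx)).re = Real.cos θ ^ n * Real.cos (n * ψ) ∧
    (expec G (onSite (0 : Fin (n + 1)) σy)).re = -(Real.cos θ ^ n * Real.sin (n * ψ)) ∧
    (expec G (onSite (0 : Fin (n + 1)) σz)).re = 0 ∧
    1 - pauliNormSq G 0 = 1 - Real.cos θ ^ (2 * n) :=
  stmt13_general n ψ θ
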